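/- Equivalently, for every positive integer n the map 𝔮 ↦ 𝔮^{(n)} := d_{com,A}^{(n)}(𝔮)* (the transpose of d_{com,A}^{(n)}(𝔮)) is order-preserving for the dominance order: 𝔮 ≤ 𝔮′ implies 𝔮^{(n)} ≤ 𝔮′^{(n)}. -/

import Mathlib

noncomputable section
open scoped Classical

namespace PaperStmt

/-- The parts of a partition (multiset of naturals) sorted in non-increasing order. -/
def sortDesc (p : Multiset ℕ) : List ℕ := (p.sort (· ≤ ·)).reverse

/-- Partial sum of the first `k` entries of a list. -/
def psum (l : List ℕ) (k : ℕ) : ℕ := (l.take k).sum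

/-- Dominance order on partitions of the same integer. -/
def Dom (p q : Multiset ℕ) : Prop :=
  p.sum = q.sum ∧ ∀ k, psum (sortDesc p) k ≤ psum (sortDesc q) k

/-- A partition: a multiset of positive parts. -/
def IsPartition (p : Multiset ℕ) : Prop := 0 ∉ p

/-- Type B: partition of an odd integer, every even part with even multiplicity. -/
def typeB (p : Multiset ℕ) : Prop := Odd p.sum ∧ ∀ v ≠ 0, Even v → Even (p.count v)

/-- Type C: partition of an even integer, every odd part with even multiplicity. -/
def typeC (p : Multiset ℕ) : Prop := Even p.sum ∧ ∀ v, Odd v → Even (p.count v)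

/-- Type D: partition of an even integer, every even part with even multiplicity. -/
def typeD (p : Multiset ℕ) : Prop := Even p.sum ∧ ∀ v ≠ 0, Even v → Even (p.count v)

/-- `q` is the `X`-collapse of `p`: the largest partition of type `X` below `p`
in dominance order. -/
def IsCollapse (X : Multiset ℕ → Prop) (p q : Multiset ℕ) : Prop :=
  X q ∧ Dom q p ∧ ∀ q', X q' → Dom q' p → Dom q' q

def collapse (X : Multiset ℕ → Prop) (p : Multiset ℕ) : Multiset ℕ :=
  if h : ∃ q, IsCollapse X p q then h.choose else 0

def collapseB : Multiset ℕ → Multiset ℕ := collapse typeB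
def collapseC : Multiset ℕ → Multiset ℕ := collapse typeC
def collapseD : Multiset ℕ → Multiset ℕ := collapse typeD

/-- The largest part. -/
def maxPart (p : Multiset ℕ) : ℕ := (sortDesc p).headI

/-- The smallest (positive) part. -/
def minPart (p : Multiset ℕ) : ℕ := (sortDesc p).getLastD 0

/-- `p⁺`: add 1 to the largest part. -/
def pplus (p : Multiset ℕ) : Multiset ℕ := (maxPart p + 1) ::ₘ p.erase (maxPart p)

/-- `p⁻`: subtract 1 from the smallest part, dropping a resulting zero. -/
def pminus (p : Multiset ℕ) : Multiset ℕ :=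
  Multiset.filter (0 < ·) ((minPart p - 1) ::ₘ p.erase (minPart p))

/-- `p⁺⁻`: add 1 to the largest part and subtract 1 from the smallest part. -/
def pmOp (p : Multiset ℕ) : Multiset ℕ := pminus (pplus p)

def zipSum : List ℕ → List ℕ → List ℕ
  | [], l => l
  | a :: as, [] => a :: as
  | a :: as, b :: bs => (a + b) :: zipSum as bs

/-- Coordinatewise sum of two partitions. -/
def addP (p q : Multiset ℕ) : Multiset ℕ := (zipSum (sortDesc p) (sortDesc q) : List ℕ)

/-- Double every part of a partition. -/
def doubleP (p : Multiset ℕ) : Multiset ℕ := p.map (fun v => 2 * v)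

/-- The partition `𝔰(m; n) = (n^a, b)` where `m = n a + b`, `0 ≤ b < n`. -/
def sMn (m n : ℕ) : Multiset ℕ :=
  Multiset.replicate (m / n) n + (if m % n = 0 then 0 else {m % n})

/-- The duality `d_{com,A}^{(n)}`: coordinatewise sum of the `𝔰(pᵢ; n)`. -/
def dcomA (n : ℕ) (p : Multiset ℕ) : Multiset ℕ :=
  (sortDesc p).foldr (fun q acc => addP (sMn q n) acc) 0

/-- Transpose (conjugate) of a partition: the `j`-th part is `#{i : pᵢ ≥ j}`. -/
def transposeP (p : Multiset ℕ) : Multiset ℕ :=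
  Multiset.filter (0 < ·)
    ((Multiset.range (maxPart p)).map (fun j => (p.filter (fun v => j + 1 ≤ v)).card))

/-!
The `j`-th part of `d_{com,A}^{(n)}(𝔮)` is `c j = ∑ᵢ min n (qᵢ - j n)`, antitone in `j`, and the
`k`-th partial sum of a transpose `λ*` is `∑_v min v k` over the parts `v` of `λ`. Hence the
`k`-th partial sum of `𝔮^{(n)}` is
`∑_j min (c j) k = min_x (k x + ∑_{j ≥ x} c j) = min_x (k x + ∑ᵢ (qᵢ - x n)₊)`,
the minimum being attained at the first `x` with `c x ≤ k`. Since `𝔭 ≤ 𝔮` gives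
`∑ᵢ (pᵢ - y)₊ ≤ ∑ᵢ (qᵢ - y)₊` for every `y` (compare partial sums over the parts of `𝔭` that
exceed `y`), the minimum for `𝔭` is at most the one for `𝔮`.
-/

open Finset (range Ico)

lemma coe_sortDesc (M : Multiset ℕ) : (sortDesc M : Multiset ℕ) = M := by
  rw [sortDesc, Multiset.coe_reverse, Multiset.sort_eq]

lemma pairwise_sortDesc (M : Multiset ℕ) : (sortDesc M).Pairwise (· ≥ ·) :=
  List.pairwise_reverse.2 (Multiset.pairwise_sort M _)

lemma sortDesc_coe {L : List ℕ} (hL : L.Pairwise (· ≥ ·)) : sortDesc L = L :=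
  (Multiset.coe_eq_coe.1 (coe_sortDesc L)).eq_of_pairwise' (pairwise_sortDesc _) hL

lemma mem_sortDesc {M : Multiset ℕ} {v : ℕ} : v ∈ sortDesc M ↔ v ∈ M := by
  rw [← Multiset.mem_coe, coe_sortDesc]

lemma length_sortDesc (M : Multiset ℕ) : (sortDesc M).length = M.card := by
  rw [← Multiset.coe_card, coe_sortDesc]

lemma sum_map_sortDesc (f : ℕ → ℕ) (M : Multiset ℕ) :
    ((sortDesc M).map f).sum = (M.map f).sum := by
  rw [← Multiset.sum_coe, ← Multiset.map_coe, coe_sortDesc]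

lemma sortDesc_cons {a : ℕ} {M : Multiset ℕ} (h : ∀ v ∈ M, v ≤ a) :
    sortDesc (a ::ₘ M) = a :: sortDesc M := by
  conv_lhs => rw [← coe_sortDesc M, Multiset.cons_coe]
  exact sortDesc_coe
    (List.pairwise_cons.2 ⟨fun v hv => h v (mem_sortDesc.1 hv), pairwise_sortDesc M⟩)

lemma sum_eq_psum_sortDesc {M : Multiset ℕ} {k : ℕ} (hk : M.card ≤ k) :
    M.sum = psum (sortDesc M) k := by
  rw [psum, List.take_of_length_le (by rwa [length_sortDesc]), ← Multiset.sum_coe, coe_sortDesc]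

lemma List.pairwise_ge_iff_antitone_getD {L : List ℕ} :
    L.Pairwise (· ≥ ·) ↔ Antitone (L.getD · 0) := by
  rw [List.pairwise_iff_getElem]
  constructor
  · intro h i j hij
    dsimp only
    by_cases hj : j < L.length
    · rw [List.getD_eq_getElem _ _ hj, List.getD_eq_getElem _ _ (hij.trans_lt hj)]
      rcases hij.lt_or_eq with hij | rfl
      · exact h i j _ hj hij
      · exact le_rfl
    · rw [List.getD_eq_default _ _ (not_lt.1 hj)]
      exact Nat.zero_le _
  · intro h i j hi hj hij
    have : L.getD j 0 ≤ L.getD i 0 := h hij.le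
    rwa [List.getD_eq_getElem _ _ hi, List.getD_eq_getElem _ _ hj] at this

lemma List.sum_map_eq_sum_range_getD {α M : Type*} [AddCommMonoid M] {f : α → M} {d : α}
    (hf : f d = 0) (L : List α) {J : ℕ} (hJ : L.length ≤ J) :
    (L.map f).sum = ∑ j ∈ range J, f (L.getD j d) := by
  induction L generalizing J with
  | nil => simp [hf]
  | cons a L ih =>
    rw [List.length_cons] at hJ
    obtain ⟨J, rfl⟩ : ∃ J', J = J' + 1 := ⟨J - 1, by omega⟩
    rw [Finset.sum_range_succ', List.map_cons, List.sum_cons, ih (J := J) (by omega), add_comm]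
    simp

lemma le_maxPart {M : Multiset ℕ} {v : ℕ} (hv : v ∈ M) : v ≤ maxPart M := by
  rw [← mem_sortDesc] at hv
  have hs := pairwise_sortDesc M
  rw [maxPart]
  cases hL : sortDesc M with
  | nil => simp [hL] at hv
  | cons a t =>
    rw [hL] at hv hs
    rcases List.mem_cons.1 hv with rfl | hv
    · exact le_rfl
    · exact List.rel_of_pairwise_cons hs hv

lemma maxPart_mem {M : Multiset ℕ} (h : 0 < maxPart M) : maxPart M ∈ M := by
  rw [← mem_sortDesc, maxPart]
  cases hL : sortDesc M with
  | nil => simp [maxPart, hL] at h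
  | cons a t => simp

lemma transposeP_eq_coe (M : Multiset ℕ) :
    transposeP M = ↑((List.range (maxPart M)).map fun j => (M.filter (j + 1 ≤ ·)).card) := by
  rw [transposeP, Multiset.range, Multiset.map_coe, Multiset.filter_coe,
    List.filter_eq_self.2]
  simp only [List.mem_map, List.mem_range, decide_eq_true_eq, forall_exists_index, and_imp]
  rintro _ j hj rfl
  exact Multiset.card_pos_iff_exists_mem.2
    ⟨maxPart M, Multiset.mem_filter.2 ⟨maxPart_mem (by omega), hj⟩⟩

lemma sortDesc_transposeP (M : Multiset ℕ) :
    sortDesc (transposeP M) =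
      (List.range (maxPart M)).map fun j => (M.filter (j + 1 ≤ ·)).card := by
  rw [transposeP_eq_coe]
  refine sortDesc_coe (List.pairwise_map.2 (List.pairwise_lt_range.imp fun hij => ?_))
  exact Multiset.card_le_card (Multiset.monotone_filter_right _ fun v hv => by omega)

lemma sum_range_card_filter (M : Multiset ℕ) (K : ℕ) :
    ∑ j ∈ range K, (M.filter (j + 1 ≤ ·)).card = (M.map (min · K)).sum := by
  induction M using Multiset.induction_on with
  | empty => simp
  | cons a M ih =>
    simp only [Multiset.filter_cons, Multiset.card_add, Finset.sum_add_distrib, ih,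
      Multiset.map_cons, Multiset.sum_cons, apply_ite Multiset.card, Multiset.card_singleton,
      Multiset.card_zero]
    have hfilter : {j ∈ range K | j + 1 ≤ a} = range (min a K) := by
      ext j
      simp only [Finset.mem_filter, Finset.mem_range]
      omega
    rw [Finset.sum_boole, hfilter, Finset.card_range, Nat.cast_id]

lemma psum_sortDesc_transposeP (M : Multiset ℕ) (k : ℕ) :
    psum (sortDesc (transposeP M)) k = (M.map (min · k)).sum := by
  rw [sortDesc_transposeP, psum, ← List.map_take, List.take_range]
  change ∑ j ∈ range (min k (maxPart M)), _ = _
  rw [sum_range_card_filter]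
  congr 1
  refine Multiset.map_congr rfl fun v hv => ?_
  have := le_maxPart hv
  omega

lemma sum_transposeP (M : Multiset ℕ) : (transposeP M).sum = M.sum := by
  rw [sum_eq_psum_sortDesc (le_add_right le_rfl : _ ≤ (transposeP M).card + M.sum),
    psum_sortDesc_transposeP]
  congr 1
  refine (Multiset.map_congr rfl fun v hv => ?_).trans (Multiset.map_id' M)
  have := Multiset.le_sum_of_mem hv
  omega

/-- The `j`-th largest part of `M`, counted from `0`; it is `0` past the last part. -/
def nthPart (M : Multiset ℕ) (j : ℕ) : ℕ := (sortDesc M).getD j 0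

lemma sum_map_eq_sum_range_nthPart {f : ℕ → ℕ} (hf : f 0 = 0) {M : Multiset ℕ} {J : ℕ}
    (hJ : M.card ≤ J) : (M.map f).sum = ∑ j ∈ range J, f (nthPart M j) := by
  rw [← sum_map_sortDesc]
  exact List.sum_map_eq_sum_range_getD hf _ (by rwa [length_sortDesc])

lemma nthPart_zero (j : ℕ) : nthPart 0 j = 0 := by
  simp [nthPart, sortDesc]

lemma nthPart_cons {a : ℕ} {M : Multiset ℕ} (h : ∀ v ∈ M, v ≤ a) (j : ℕ) :
    nthPart (a ::ₘ M) j = if j = 0 then a else nthPart M (j - 1) := by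
  rw [nthPart, sortDesc_cons h]
  cases j <;> simp [nthPart]

lemma List.getD_zipSum (x y : List ℕ) (j : ℕ) :
    (zipSum x y).getD j 0 = x.getD j 0 + y.getD j 0 := by
  induction x generalizing y j with
  | nil => simp [zipSum]
  | cons a as ih =>
    cases y with
    | nil => simp [zipSum]
    | cons b bs => cases j <;> simp only [zipSum, List.getD_cons_zero, List.getD_cons_succ, ih]

lemma nthPart_addP (M N : Multiset ℕ) (j : ℕ) :
    nthPart (addP M N) j = nthPart M j + nthPart N j := by
  have hsorted : (zipSum (sortDesc M) (sortDesc N)).Pairwise (· ≥ ·) := by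
    refine List.pairwise_ge_iff_antitone_getD.2 fun i j hij => ?_
    simp only [List.getD_zipSum]
    exact add_le_add (List.pairwise_ge_iff_antitone_getD.1 (pairwise_sortDesc M) hij)
      (List.pairwise_ge_iff_antitone_getD.1 (pairwise_sortDesc N) hij)
  rw [nthPart, addP, sortDesc_coe hsorted, List.getD_zipSum, nthPart, nthPart]

lemma sMn_add_self {n : ℕ} (hn : 0 < n) (m : ℕ) : sMn (m + n) n = n ::ₘ sMn m n := by
  rw [sMn, sMn, Nat.add_div_right _ hn, Nat.add_mod_right, Multiset.replicate_succ,
    Multiset.cons_add]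

lemma le_of_mem_sMn {n m v : ℕ} (hn : 0 < n) (hv : v ∈ sMn m n) : v ≤ n := by
  rw [sMn, Multiset.mem_add] at hv
  rcases hv with hv | hv
  · exact (Multiset.eq_of_mem_replicate hv).le
  · split_ifs at hv
    · simp at hv
    · rw [Multiset.mem_singleton.1 hv]
      exact (Nat.mod_lt m hn).le

lemma nthPart_sMn {n : ℕ} (hn : 0 < n) (m j : ℕ) : nthPart (sMn m n) j = min n (m - j * n) := by
  induction m using Nat.strong_induction_on generalizing j with
  | _ m ih =>
    rcases lt_or_ge m n with hmn | hnm
    · have hs : sMn m n = if m = 0 then 0 else m ::ₘ 0 := by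
        simp [sMn, Nat.div_eq_of_lt hmn, Nat.mod_eq_of_lt hmn]
      rw [hs]
      split_ifs with hm
      · simp [hm, nthPart_zero]
      · rw [nthPart_cons (by simp), nthPart_zero]
        rcases j with _ | j
        · simp only [if_true, zero_mul, Nat.sub_zero]
          omega
        · have : n ≤ (j + 1) * n := Nat.le_mul_of_pos_left n j.succ_pos
          simp only [Nat.add_one_ne_zero, if_false]
          omega
    · obtain ⟨m, rfl⟩ := Nat.exists_eq_add_of_le' hnm
      rw [sMn_add_self hn, nthPart_cons (fun v => le_of_mem_sMn hn)]
      rcases j with _ | j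
      · simp
      · rw [if_neg j.succ_ne_zero, Nat.add_sub_cancel, ih m (by omega)]
        congr 1
        rw [Nat.succ_mul]
        omega

/-- The `j`-th part of `d_{com,A}^{(n)}(p)`; that of `𝔰(m; n)` is `min n (m - j n)`. -/
def dcomAPart (n : ℕ) (p : Multiset ℕ) (j : ℕ) : ℕ := (p.map fun m => min n (m - j * n)).sum

lemma nthPart_dcomA {n : ℕ} (hn : 0 < n) (p : Multiset ℕ) (j : ℕ) :
    nthPart (dcomA n p) j = dcomAPart n p j := by
  rw [dcomA, dcomAPart, ← sum_map_sortDesc]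
  induction sortDesc p generalizing j with
  | nil => simp [nthPart_zero]
  | cons m l ih =>
    simp only [List.foldr_cons, nthPart_addP, nthPart_sMn hn, ih, List.map_cons, List.sum_cons]

lemma antitone_dcomAPart (n : ℕ) (p : Multiset ℕ) : Antitone (dcomAPart n p) := by
  intro i j hij
  refine Multiset.sum_map_le_sum_map _ _ fun m _ => ?_
  have := Nat.mul_le_mul_right n hij
  omega

lemma dcomAPart_eq_zero {n J : ℕ} {p : Multiset ℕ} (hp : ∀ m ∈ p, m ≤ J * n) :
    dcomAPart n p J = 0 :=
  Multiset.sum_eq_zero fun v hv => by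
    obtain ⟨m, hm, rfl⟩ := Multiset.mem_map.1 hv
    have := hp m hm
    omega

lemma sum_range_min_tsub_mul (n m J : ℕ) : ∑ j ∈ range J, min n (m - j * n) = min m (J * n) := by
  induction J with
  | zero => simp
  | succ J ih =>
    rw [Finset.sum_range_succ, ih, Nat.succ_mul]
    omega

lemma sum_Ico_dcomAPart {n x J : ℕ} {p : Multiset ℕ} (hx : x ≤ J) (hp : ∀ m ∈ p, m ≤ J * n) :
    ∑ j ∈ Ico x J, dcomAPart n p j = (p.map (· - x * n)).sum := by
  simp only [dcomAPart, ← Multiset.sum_map_sum]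
  refine congrArg Multiset.sum (Multiset.map_congr rfl fun m hm => ?_)
  have hsplit := Finset.sum_range_add_sum_Ico (fun j => min n (m - j * n)) hx
  rw [sum_range_min_tsub_mul, sum_range_min_tsub_mul] at hsplit
  have := hp m hm
  omega

lemma le_mul_of_mem_of_sum_le {n J m : ℕ} {p : Multiset ℕ} (hn : 0 < n) (hJ : p.sum ≤ J)
    (hm : m ∈ p) : m ≤ J * n :=
  (Multiset.le_sum_of_mem hm).trans (hJ.trans (Nat.le_mul_of_pos_right J hn))

lemma sum_dcomA {n : ℕ} (hn : 0 < n) (p : Multiset ℕ) : (dcomA n p).sum = p.sum := by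
  have hJ : (dcomA n p).card ≤ (dcomA n p).card + p.sum := le_add_right le_rfl
  rw [← Multiset.map_id' (dcomA n p), sum_map_eq_sum_range_nthPart rfl hJ]
  simp only [nthPart_dcomA hn, Finset.range_eq_Ico]
  rw [sum_Ico_dcomAPart (Nat.zero_le _)
    fun m => le_mul_of_mem_of_sum_le hn (le_add_left le_rfl)]
  simp

lemma psum_transposeP_dcomA {n J : ℕ} (hn : 0 < n) {p : Multiset ℕ} (hJ : (dcomA n p).card ≤ J)
    (k : ℕ) :
    psum (sortDesc (transposeP (dcomA n p))) k = ∑ j ∈ range J, min (dcomAPart n p j) k := by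
  rw [psum_sortDesc_transposeP, sum_map_eq_sum_range_nthPart (Nat.zero_min k) hJ]
  simp only [nthPart_dcomA hn]

lemma sum_range_min_le (c : ℕ → ℕ) (k : ℕ) {x J : ℕ} (hx : x ≤ J) :
    ∑ j ∈ range J, min (c j) k ≤ k * x + ∑ j ∈ Ico x J, c j := by
  rw [← Finset.sum_range_add_sum_Ico _ hx]
  gcongr
  · exact (Finset.sum_le_sum fun j _ => min_le_right _ _).trans (by simp [mul_comm])
  · exact min_le_left _ _

lemma exists_sum_range_min_eq {c : ℕ → ℕ} (hc : Antitone c) {k J : ℕ} (hJ : c J ≤ k) :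
    ∃ x ≤ J, ∑ j ∈ range J, min (c j) k = k * x + ∑ j ∈ Ico x J, c j := by
  have hex : ∃ x, c x ≤ k := ⟨J, hJ⟩
  refine ⟨Nat.find hex, Nat.find_min' hex hJ, ?_⟩
  rw [← Finset.sum_range_add_sum_Ico _ (Nat.find_min' hex hJ)]
  congr 1
  · rw [Finset.sum_congr rfl fun j hj =>
      min_eq_right (not_le.1 (Nat.find_min hex (Finset.mem_range.1 hj))).le]
    simp [mul_comm]
  · exact Finset.sum_congr rfl fun j hj =>
      min_eq_left ((hc (Finset.mem_Ico.1 hj).1).trans (Nat.find_spec hex))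

lemma psum_le_sum_map_tsub_add (L : List ℕ) (y t : ℕ) :
    psum L t ≤ (L.map (· - y)).sum + t * y := by
  induction L generalizing t with
  | nil => simp [psum]
  | cons a L ih =>
    cases t with
    | zero => simp [psum]
    | succ t =>
      have := ih t
      simp only [psum, List.take_succ_cons, List.sum_cons, List.map_cons] at this ⊢
      rw [Nat.succ_mul]
      omega

lemma sum_map_tsub_add_eq_psum {L : List ℕ} (hL : L.Pairwise (· ≥ ·)) (y : ℕ) :
    (L.map (· - y)).sum + L.countP (y < ·) * y = psum L (L.countP (y < ·)) := by
  induction L with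
  | nil => simp [psum]
  | cons a L ih =>
    rw [List.pairwise_cons] at hL
    by_cases ha : y < a
    · have := ih hL.2
      simp only [List.countP_cons_of_pos (p := (y < ·)) (by simpa using ha), psum,
        List.take_succ_cons, List.sum_cons, List.map_cons] at this ⊢
      rw [Nat.succ_mul]
      omega
    · have hle : ∀ m ∈ a :: L, m ≤ y := fun m hm =>
        (List.mem_cons.1 hm).elim (fun h => h ▸ not_lt.1 ha)
          fun hm => (hL.1 m hm).trans (not_lt.1 ha)
      rw [List.countP_eq_zero.2 fun m hm => by simpa using hle m hm,
        List.sum_eq_zero fun v hv => ?_]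
      · simp [psum]
      · obtain ⟨m, hm, rfl⟩ := List.mem_map.1 hv
        exact Nat.sub_eq_zero_of_le (hle m hm)

lemma Dom.sum_map_tsub_le {p q : Multiset ℕ} (h : Dom p q) (y : ℕ) :
    (p.map (· - y)).sum ≤ (q.map (· - y)).sum := by
  rw [← sum_map_sortDesc, ← sum_map_sortDesc]
  have hp := sum_map_tsub_add_eq_psum (pairwise_sortDesc p) y
  have hq := psum_le_sum_map_tsub_add (sortDesc q) y ((sortDesc p).countP (y < ·))
  have := h.2 ((sortDesc p).countP (y < ·))
  omega

theorem transpose_dcomA_orderPreserving_general (n : ℕ) (hn : 0 < n) (p q : Multiset ℕ)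
    (h : Dom p q) :
    Dom (transposeP (dcomA n p)) (transposeP (dcomA n q)) := by
  refine ⟨by rw [sum_transposeP, sum_transposeP, sum_dcomA hn, sum_dcomA hn, h.1], fun k => ?_⟩
  set J := (dcomA n p).card + (dcomA n q).card + p.sum + q.sum
  have hpJ : ∀ m ∈ p, m ≤ J * n := fun m => le_mul_of_mem_of_sum_le hn (by omega)
  have hqJ : ∀ m ∈ q, m ≤ J * n := fun m => le_mul_of_mem_of_sum_le hn (by omega)
  rw [psum_transposeP_dcomA hn (J := J) (by omega), psum_transposeP_dcomA hn (J := J) (by omega)]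
  obtain ⟨x, hxJ, hq⟩ :=
    exists_sum_range_min_eq (antitone_dcomAPart n q) ((dcomAPart_eq_zero hqJ).trans_le k.zero_le)
  calc ∑ j ∈ range J, min (dcomAPart n p j) k
      ≤ k * x + ∑ j ∈ Ico x J, dcomAPart n p j := sum_range_min_le _ k hxJ
    _ = k * x + (p.map (· - x * n)).sum := by rw [sum_Ico_dcomAPart hxJ hpJ]
    _ ≤ k * x + (q.map (· - x * n)).sum := add_le_add_right (h.sum_map_tsub_le _) _
    _ = ∑ j ∈ range J, min (dcomAPart n q j) k := by rw [hq, sum_Ico_dcomAPart hxJ hqJ]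

/-- the map `𝔮 ↦ (d_{com,A}^{(n)}(𝔮))*` is order-preserving
for the dominance order. -/
theorem transpose_dcomA_orderPreserving (n : ℕ) (hn : 0 < n) (p q : Multiset ℕ)
    (hp : IsPartition p) (hq : IsPartition q) (h : Dom p q) :
    Dom (transposeP (dcomA n p)) (transposeP (dcomA n q)) :=
  transpose_dcomA_orderPreserving_general n hn p q h

end PaperStmt
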